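/- arXiv:1307.5632 — 2 statements merged into one kernel-verified Lean document; each statement's English description precedes it below -/
import Mathlib

section
/- Let A be a Hopf algebra over a field k whose antipode S is bijective, with inverse T = S⁻¹. Let λ : A → k be a left integral in the dual and let Λ ∈ A be a left integral with λ(Λ) = 1. Then for every a ∈ A one has λ(T(Λ₍₁₎) a) · Λ₍₂₎ = a and λ(a Λ₍₂₎) · T(Λ₍₁₎) = a (implicit summation over the Sweedler components of Δ(Λ) understood). In other words, the element U_λ = Λ₍₂₎ ⊗ S⁻¹(Λ₍₁₎) ∈ A ⊗ A satisfies the two characterizing properties of the canonical element of the non-degenerate form ⟨a, b⟩_λ = λ(ab). -/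
/-!
The map `P a = λ(a Λ₍₂₎) Λ₍₁₎` is a right convolution inverse of the identity: by the
integral property of `λ`, `a₍₁₎ P(a₍₂₎) = λ(a Λ)·1 = ε(a)·1`. Since `S` is a left convolution
inverse of the identity, `P = S`, and applying `T` gives `λ(a Λ₍₂₎) T(Λ₍₁₎) = a`.
This exhibits `A` as spanned by the `T(Λ₍₁₎)`, hence finite dimensional, with the form
`λ(ab)` nondegenerate on the left, hence on both sides; the remaining identity
`λ(T(Λ₍₁₎) a) Λ₍₂₎ = a` is then forced, as for any pair of dual bases.
-/

open scoped TensorProduct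
open Coalgebra WithConv

theorem LinearMap.sum_apply_smul_eq_self_of_sum_apply_smul_eq_self {K V ι : Type*} [Field K]
    [AddCommGroup V] [Module K V] (B : V →ₗ[K] V →ₗ[K] K) (s : Finset ι) (u v : ι → V)
    (h : ∀ a, ∑ i ∈ s, B a (v i) • u i = a) (b : V) :
    ∑ i ∈ s, B (u i) b • v i = b := by
  have : FiniteDimensional K V := ⟨Submodule.fg_def.2 ⟨u '' s, s.finite_toSet.image u,
    eq_top_iff.2 fun a _ => h a ▸ Submodule.sum_mem _ fun i hi =>
      Submodule.smul_mem _ _ (Submodule.subset_span ⟨i, hi, rfl⟩)⟩⟩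
  have hB : Function.Injective B := (injective_iff_map_eq_zero B).2 fun a ha => by
    simpa [ha] using (h a).symm
  have hBflip : Function.Injective B.flip := flip_injective_iff₂.2 <|
    (injective_iff_surjective_of_finrank_eq_finrank Subspace.dual_finrank_eq.symm).1 hB
  refine hBflip (LinearMap.ext fun a => ?_)
  conv_rhs => rw [← h a]
  simp [map_sum, mul_comm]

theorem TensorProduct.rid_lTensor_tmul_one_mul {k A B : Type*} [CommSemiring k] [Semiring A]
    [Algebra k A] [Semiring B] [Algebra k B] (f : B →ₗ[k] k) (u : A) (t : A ⊗[k] B) :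
    TensorProduct.rid k A (f.lTensor A ((u ⊗ₜ 1) * t)) =
      u * TensorProduct.rid k A (f.lTensor A t) := by
  induction t using TensorProduct.induction_on with
  | zero => simp
  | tmul a b => simp
  | add t t' ht ht' => simp [mul_add, ht, ht']

namespace HopfAlgebra

variable {k A : Type*} [CommSemiring k] [Semiring A] [HopfAlgebra k A]

variable (k) in
def IsLeftIntegral (Λ : A) : Prop := ∀ a : A, a * Λ = counit (R := k) a • Λ

def IsLeftIntegralDual (lam : A →ₗ[k] k) : Prop :=
  ∀ a : A, TensorProduct.rid k A (lam.lTensor A (comul a)) = lam a • 1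

theorem antipode_eq_of_isLeftIntegral {lam : A →ₗ[k] k} {Λ : A} (hlam : IsLeftIntegralDual lam)
    (hΛ : IsLeftIntegral k Λ) (hΛ1 : lam Λ = 1) :
    antipode k = (TensorProduct.rid k A).toLinearMap ∘ₗ lam.lTensor A ∘ₗ
      LinearMap.mulRight k (comul Λ) ∘ₗ TensorProduct.mk k A A 1 := by
  set P := (TensorProduct.rid k A).toLinearMap ∘ₗ lam.lTensor A ∘ₗ
      LinearMap.mulRight k (comul Λ) ∘ₗ TensorProduct.mk k A A 1
  have id_mul_P : toConv LinearMap.id * toConv P = 1 := by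
    ext x
    have hx : comul (R := k) x * comul Λ = ∑ i ∈ (ℛ k x).index,
        ((ℛ k x).left i ⊗ₜ 1) * ((1 ⊗ₜ (ℛ k x).right i) * comul Λ) := by
      simp_rw [← mul_assoc, Algebra.TensorProduct.tmul_mul_tmul, mul_one, one_mul,
        ← Finset.sum_mul, (ℛ k x).eq]
    rw [(ℛ k x).convMul_apply]
    calc ∑ i ∈ (ℛ k x).index, (ℛ k x).left i * P ((ℛ k x).right i)
        = TensorProduct.rid k A (lam.lTensor A (comul (R := k) (x * Λ))) := by
          simp [P, Bialgebra.comul_mul, hx, map_sum, TensorProduct.rid_lTensor_tmul_one_mul]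
      _ = algebraMap k A (counit (R := k) x) := by
          rw [hlam, hΛ, map_smul, hΛ1, smul_eq_mul, mul_one, Algebra.algebraMap_eq_smul_one]
  exact congrArg ofConv (left_inv_eq_right_inv LinearMap.antipode_mul_id id_mul_P)

theorem sum_smul_eq_antipode_of_isLeftIntegral {lam : A →ₗ[k] k} {Λ : A}
    (hlam : IsLeftIntegralDual lam) (hΛ : IsLeftIntegral k Λ) (hΛ1 : lam Λ = 1) {ι : Type*}
    (r : Repr k Λ ι) (a : A) :
    ∑ i ∈ r.index, lam (a * r.right i) • r.left i = antipode k a := by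
  rw [antipode_eq_of_isLeftIntegral hlam hΛ hΛ1]
  simp [← r.eq, Finset.mul_sum, map_sum]

end HopfAlgebra

/-- Let `A` be a Hopf algebra over a field `k` whose antipode `S` is
bijective with two-sided inverse `T`.  Let `λ` be a left integral in the dual and `Λ` a left
integral with `λ(Λ) = 1`.  Then, for any representation `Δ(Λ) = ∑ᵢ Λ1 i ⊗ Λ2 i` and any
`a ∈ A`, one has `∑ᵢ λ(T(Λ1 i) * a) • Λ2 i = a` and `∑ᵢ λ(a * Λ2 i) • T(Λ1 i) = a`; i.e.
`U_λ = Λ₍₂₎ ⊗ S⁻¹(Λ₍₁₎)` is the canonical element of the form `⟨a, b⟩ = λ(ab)`. -/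
theorem Ulambda_left_integral (k A : Type*) [Field k] [Ring A] [HopfAlgebra k A]
    (T : A → A)
    (hT1 : ∀ a : A, T (HopfAlgebra.antipode (R := k) a) = a)
    (hT2 : ∀ a : A, HopfAlgebra.antipode (R := k) (T a) = a)
    (lam : A →ₗ[k] k)
    (hlam : ∀ a : A, (TensorProduct.rid k A)
        ((LinearMap.lTensor A lam) (Coalgebra.comul (R := k) a)) = lam a • 1)
    (Λ : A) (hΛ : ∀ a : A, a * Λ = Coalgebra.counit (R := k) a • Λ)
    (hΛ1 : lam Λ = 1)
    (ι : Type*) (s : Finset ι) (Λ1 Λ2 : ι → A)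
    (hrep : Coalgebra.comul (R := k) Λ = ∑ i ∈ s, Λ1 i ⊗ₜ[k] Λ2 i)
    (a : A) :
    (∑ i ∈ s, lam (T (Λ1 i) * a) • Λ2 i) = a ∧
    (∑ i ∈ s, lam (a * Λ2 i) • T (Λ1 i)) = a := by
  have hS (b : A) : ∑ i ∈ s, lam (b * Λ2 i) • Λ1 i = HopfAlgebra.antipode k b :=
    HopfAlgebra.sum_smul_eq_antipode_of_isLeftIntegral hlam hΛ hΛ1 ⟨s, Λ1, Λ2, hrep.symm⟩ b
  have hdual (b : A) : ∑ i ∈ s, lam (b * Λ2 i) • T (Λ1 i) = b := by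
    rw [← hT1 (∑ i ∈ s, _), map_sum]
    simp_rw [map_smul, hT2, hS, hT1]
  exact ⟨((LinearMap.mul k A).compr₂ lam).sum_apply_smul_eq_self_of_sum_apply_smul_eq_self
    s (T ∘ Λ1) Λ2 hdual a, hdual a⟩
end

section
/- Let A be a finite-dimensional unimodular Hopf algebra over a field k, let λ : A → k be a nonzero left integral in the dual, and assume λ(z) = λ(S(z)) for every z in the center Z(A) of A. Then for every z ∈ Z(A) the following equality holds in A: λ(S(z₍₁₎)) · z₍₂₎ = λ(z₍₂₎) · S(z₍₁₎) (implicit summation over the Sweedler components of Δ(z) understood). -/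
/-!
Put `X = λ(S z₁) z₂` and `Y = λ(z₂) S(z₁)`. Because `λ` is a left integral, `Y = S(λ(z₂) z₁) = λ(z) 1`.
Because `S` is an anti-coalgebra map, `S X = λ(S z₁) S(z₂) = λ((S z)₂) (S z)₁ = λ(S z) 1`, which is
`λ(z) 1` by the hypothesis on central elements. Hence `S X = S Y`, and `S` is injective: the identity
`c₁ λ(a c₂) = S(a₁) λ(a₂ c)` together with the nondegeneracy of `(x, y) ↦ λ(x y)` shows that a
functional vanishing on the image of `S` vanishes, so `S` is surjective, hence bijective.
-/

open scoped TensorProduct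
open Coalgebra HopfAlgebra WithConv

noncomputable def Coalgebra.Repr.ofBasis {R A ι : Type*} [CommSemiring R] [AddCommMonoid A]
    [Module R A] [CoalgebraStruct R A] [Fintype ι] (b : Module.Basis ι R A) (a : A) :
    Repr R a ι where
  index := Finset.univ
  left := b
  right i := _root_.TensorProduct.lid R A
    (LinearMap.rTensor A (b.coord i) (CoalgebraStruct.comul (R := R) a))
  eq := by
    classical
    have h := (_root_.TensorProduct.equivFinsuppOfBasisLeft b).symm_apply_apply
      (CoalgebraStruct.comul (R := R) a)
    rw [_root_.TensorProduct.equivFinsuppOfBasisLeft_symm_apply,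
      Finsupp.sum_fintype _ _ (by simp)] at h
    simpa only [_root_.TensorProduct.equivFinsuppOfBasisLeft_apply] using h

theorem Coalgebra.counit_lid_rTensor_comul {R A : Type*} [CommSemiring R] [AddCommMonoid A]
    [Module R A] [Coalgebra R A] (f : A →ₗ[R] R) (a : A) :
    counit (R := R) (_root_.TensorProduct.lid R A (LinearMap.rTensor A f (comul a))) = f a := by
  have h : counit ∘ₗ (_root_.TensorProduct.lid R A).toLinearMap ∘ₗ LinearMap.rTensor A f =
      f ∘ₗ (_root_.TensorProduct.rid R A).toLinearMap ∘ₗ LinearMap.lTensor A counit := by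
    ext x y
    simp [mul_comm]
  simpa using congr($h (comul a))

namespace HopfAlgebra

section AntiCoalgebra

variable {R A : Type*} [CommSemiring R] [Semiring A] [HopfAlgebra R A]

/-- In the convolution algebra of maps `A → A ⊗ A`, `Δ ∘ S` is a right inverse of `Δ`
(`LinearMap.comul_right_inv`) and `(S ⊗ S) ∘ τ ∘ Δ` a left one: it equals `(ι₂ ∘ S) * (ι₁ ∘ S)`,
while `Δ = ι₁ * ι₂` for the two algebra inclusions `ι₁, ι₂ : A → A ⊗ A`. -/
theorem comul_comp_antipode :
    comul ∘ₗ antipode R =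
      TensorProduct.map (antipode R) (antipode R) ∘ₗ (TensorProduct.comm R A A).toLinearMap ∘ₗ
        comul := by
  let ι₁ : A →ₐ[R] A ⊗[R] A := Algebra.TensorProduct.includeLeft
  let ι₂ : A →ₐ[R] A ⊗[R] A := Algebra.TensorProduct.includeRight
  have hcomul : toConv (comul (R := R) (A := A)) =
      toConv ι₁.toLinearMap * toConv ι₂.toLinearMap := by
    ext a
    simp [(ℛ R a).convMul_apply, ι₁, ι₂, ← (ℛ R a).eq]
  have hswap : toConv (TensorProduct.map (antipode R) (antipode R) ∘ₗ
      (TensorProduct.comm R A A).toLinearMap ∘ₗ comul) =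
      toConv (ι₂.toLinearMap ∘ₗ antipode R) * toConv (ι₁.toLinearMap ∘ₗ antipode R) := by
    ext a
    simp [(ℛ R a).convMul_apply, ι₁, ι₂, ← (ℛ R a).eq]
  have hinv (ι : A →ₐ[R] A ⊗[R] A) :
      toConv (ι.toLinearMap ∘ₗ antipode R) * toConv ι.toLinearMap = 1 := by
    have h := LinearMap.algHom_comp_convMul_distrib ι (toConv (antipode R)) (toConv .id)
    rw [LinearMap.antipode_mul_id, ofConv_toConv, ofConv_toConv, LinearMap.comp_id] at h
    apply ofConv_injective
    rw [ofConv_toConv, ← h]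
    ext a
    simp
  have hleft : toConv (TensorProduct.map (antipode R) (antipode R) ∘ₗ
      (TensorProduct.comm R A A).toLinearMap ∘ₗ comul) * toConv comul = 1 := by
    rw [hswap, hcomul, mul_assoc, ← mul_assoc (toConv (ι₁.toLinearMap ∘ₗ antipode R)), hinv,
      one_mul, hinv]
  exact congrArg ofConv (left_inv_eq_right_inv hleft LinearMap.comul_right_inv).symm

theorem antipode_lid_rTensor_comp_antipode (f : A →ₗ[R] R) (a : A) :
    antipode R (TensorProduct.lid R A (LinearMap.rTensor A (f ∘ₗ antipode R) (comul a))) =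
      TensorProduct.rid R A (LinearMap.lTensor A f (comul (antipode R a))) := by
  rw [← LinearMap.comp_apply comul, comul_comp_antipode, LinearMap.comp_apply,
    LinearMap.comp_apply]
  generalize comul (R := R) a = t
  induction t using TensorProduct.induction_on with
  | zero => simp
  | tmul x y => simp
  | add x y hx hy => simp_all

theorem rid_lTensor_map_antipode_id (f : A →ₗ[R] R) (t : A ⊗[R] A) :
    TensorProduct.rid R A (LinearMap.lTensor A f (TensorProduct.map (antipode R) .id t)) =
      antipode R (TensorProduct.rid R A (LinearMap.lTensor A f t)) := by
  induction t using TensorProduct.induction_on with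
  | zero => simp
  | tmul x y => simp
  | add x y hx hy => simp_all

end AntiCoalgebra

def IsLeftIntegralInDual {k A : Type*} [CommSemiring k] [Semiring A] [HopfAlgebra k A]
    (lam : A →ₗ[k] k) : Prop :=
  ∀ a : A, TensorProduct.rid k A (LinearMap.lTensor A lam (comul a)) = lam a • 1

namespace IsLeftIntegralInDual

section Semiring

variable {k A : Type*} [CommSemiring k] [Semiring A] [HopfAlgebra k A]
variable {lam : A →ₗ[k] k} (hlam : IsLeftIntegralInDual lam)
include hlam

theorem sum_smul_left {a : A} {ι : Type*} (r : Repr k a ι) :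
    ∑ i ∈ r.index, lam (r.right i) • r.left i = lam a • 1 := by
  simpa [← r.eq, map_sum] using hlam a

/-- With `M y = c₁ λ(y c₂)`, the integral property applied to `y c` reads `id * M = λ(· c) 1` in
the convolution algebra `A → A`; multiplying by `S` on the left gives `M = S * λ(· c) 1`. -/
theorem sum_lam_mul_smul_left {a c : A} {ι κ : Type*} (ra : Repr k a ι) (rc : Repr k c κ) :
    ∑ m ∈ rc.index, lam (a * rc.right m) • rc.left m =
      ∑ i ∈ ra.index, lam (ra.right i * c) • antipode k (ra.left i) := by
  let M : A →ₗ[k] A :=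
    ∑ m ∈ rc.index, (lam ∘ₗ LinearMap.mulRight k (rc.right m)).smulRight (rc.left m)
  let L : A →ₗ[k] A := (lam ∘ₗ LinearMap.mulRight k c).smulRight 1
  have hL : toConv .id * toConv M = toConv L := by
    ext y
    rw [(ℛ k y).convMul_apply]
    have h := hlam.sum_smul_left ((ℛ k y).mul rc)
    simp only [Repr.mul_index, Repr.mul_left, Repr.mul_right, Finset.sum_product] at h
    simp [M, L, Finset.mul_sum, h]
  have hM : toConv M = toConv (antipode k) * toConv L := by
    rw [← hL, ← mul_assoc, LinearMap.antipode_mul_id, one_mul]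
  have h := congr($hM a)
  rw [ra.convMul_apply] at h
  simpa [M, L] using h

theorem lam_mul_lid_rTensor_comul (f : A →ₗ[k] k) (a c : A) :
    lam (a * TensorProduct.lid k A (LinearMap.rTensor A f (comul c))) =
      f (antipode k (TensorProduct.rid k A
        (LinearMap.lTensor A (lam ∘ₗ LinearMap.mulRight k c) (comul a)))) := by
  have h := congrArg f (hlam.sum_lam_mul_smul_left (ℛ k a) (ℛ k c))
  rw [← (ℛ k c).eq, ← (ℛ k a).eq]
  simpa [Finset.mul_sum, map_sum, mul_comm] using h

theorem lam_mul_lid_rTensor_comul_eq_zero {v : A} (hv : ∀ x, lam (x * v) = 0)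
    (f : A →ₗ[k] k) (x : A) :
    lam (x * TensorProduct.lid k A (LinearMap.rTensor A f (comul v))) = 0 := by
  have hzero : lam ∘ₗ LinearMap.mulRight k v = 0 := LinearMap.ext hv
  simp [hlam.lam_mul_lid_rTensor_comul, hzero]

end Semiring

section FiniteDimensional

variable {k A : Type*} [Field k] [Ring A] [HopfAlgebra k A] [FiniteDimensional k A]
variable {lam : A →ₗ[k] k} (hlam : IsLeftIntegralInDual lam)
include hlam

/-- Expanding `Δ v = ∑ bⱼ ⊗ vⱼ` along a basis, `ε(v) 1 = ∑ S(bⱼ) vⱼ` and every `vⱼ` is again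
annihilated by `λ(A ·)`. -/
theorem counit_eq_zero_of_forall_lam_mul_eq_zero (hne : lam ≠ 0) {v : A}
    (hv : ∀ x, lam (x * v) = 0) : counit (R := k) v = 0 := by
  obtain ⟨x, hx⟩ : ∃ x, lam x ≠ 0 := by
    by_contra! h
    exact hne (LinearMap.ext h)
  let r := Repr.ofBasis (Module.finBasis k A) v
  have hcounit : counit (R := k) v • (1 : A) = ∑ j ∈ r.index, antipode k (r.left j) * r.right j :=
    (sum_antipode_mul_eq_smul r).symm
  have hmul : counit (R := k) v * lam x = 0 :=
    calc counit (R := k) v * lam x = lam (x * (counit (R := k) v • 1)) := by simp [mul_comm]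
      _ = ∑ j ∈ r.index, lam ((x * antipode k (r.left j)) * r.right j) := by
        simp only [hcounit, Finset.mul_sum, map_sum, mul_assoc]
      _ = 0 := Finset.sum_eq_zero fun j _ => hlam.lam_mul_lid_rTensor_comul_eq_zero hv _ _
  exact (mul_eq_zero.mp hmul).resolve_right hx

theorem separatingRight (hne : lam ≠ 0) : ((LinearMap.mul k A).compr₂ lam).SeparatingRight := by
  intro v hv
  replace hv : ∀ x, lam (x * v) = 0 := hv
  rw [← Module.forall_dual_apply_eq_zero_iff k v]
  intro f
  rw [← counit_lid_rTensor_comul f v]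
  exact hlam.counit_eq_zero_of_forall_lam_mul_eq_zero hne
    (hlam.lam_mul_lid_rTensor_comul_eq_zero hv f)

theorem antipode_surjective (hne : lam ≠ 0) : Function.Surjective (antipode k (A := A)) := by
  rw [← LinearMap.dualMap_injective_iff, ← LinearMap.ker_eq_bot, LinearMap.ker_eq_bot']
  intro f hf
  ext c
  have hhit : TensorProduct.lid k A (LinearMap.rTensor A f (comul c)) = 0 :=
    hlam.separatingRight hne _ fun a => by
      simpa [hlam.lam_mul_lid_rTensor_comul] using
        LinearMap.congr_fun hf (TensorProduct.rid k A
          (LinearMap.lTensor A (lam ∘ₗ LinearMap.mulRight k c) (comul a)))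
  simpa [hhit] using (counit_lid_rTensor_comul f c).symm

theorem antipode_injective (hne : lam ≠ 0) : Function.Injective (antipode k (A := A)) :=
  LinearMap.injective_iff_surjective.mpr (hlam.antipode_surjective hne)

end FiniteDimensional

end IsLeftIntegralInDual

end HopfAlgebra

theorem central_balance_general (k A : Type*) [Field k] [Ring A] [HopfAlgebra k A]
    [FiniteDimensional k A]
    (lam : A →ₗ[k] k) (hne : lam ≠ 0)
    (hlam : ∀ a : A, (TensorProduct.rid k A)
        ((LinearMap.lTensor A lam) (Coalgebra.comul (R := k) a)) = lam a • 1)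
    (hSlam : ∀ z : A, (∀ w : A, z * w = w * z) →
      lam z = lam (HopfAlgebra.antipode (R := k) z)) :
    ∀ z : A, (∀ w : A, z * w = w * z) →
      (TensorProduct.lid k A)
          ((LinearMap.rTensor A (lam ∘ₗ HopfAlgebra.antipode (R := k)))
            (Coalgebra.comul (R := k) z)) =
        (TensorProduct.rid k A)
          ((LinearMap.lTensor A lam)
            (TensorProduct.map (HopfAlgebra.antipode (R := k)) LinearMap.id
              (Coalgebra.comul (R := k) z))) := by
  intro z hz
  have hintegral : IsLeftIntegralInDual lam := hlam
  apply hintegral.antipode_injective hne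
  rw [antipode_lid_rTensor_comp_antipode, hlam, ← hSlam z hz, rid_lTensor_map_antipode_id, hlam]
  simp only [map_smul, antipode_one]

/-- Let `A` be a finite-dimensional unimodular Hopf algebra over a field
`k`, let `λ` be a nonzero left integral in the dual, and assume `λ(z) = λ(S(z))` for every
central `z`.  Then for every `z` in the center of `A`,
`λ(S(z₍₁₎)) • z₍₂₎ = λ(z₍₂₎) • S(z₍₁₎)` in `A` (summation over the Sweedler components of
`Δ(z)` understood). -/
theorem central_balance (k A : Type*) [Field k] [Ring A] [HopfAlgebra k A]
    [FiniteDimensional k A]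
    (hu : ∀ Λ : A, (∀ a : A, a * Λ = Coalgebra.counit (R := k) a • Λ) ↔
      (∀ a : A, Λ * a = Coalgebra.counit (R := k) a • Λ))
    (lam : A →ₗ[k] k) (hne : lam ≠ 0)
    (hlam : ∀ a : A, (TensorProduct.rid k A)
        ((LinearMap.lTensor A lam) (Coalgebra.comul (R := k) a)) = lam a • 1)
    (hSlam : ∀ z : A, (∀ w : A, z * w = w * z) →
      lam z = lam (HopfAlgebra.antipode (R := k) z)) :
    ∀ z : A, (∀ w : A, z * w = w * z) →
      (TensorProduct.lid k A)
          ((LinearMap.rTensor A (lam ∘ₗ HopfAlgebra.antipode (R := k)))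
            (Coalgebra.comul (R := k) z)) =
        (TensorProduct.rid k A)
          ((LinearMap.lTensor A lam)
            (TensorProduct.map (HopfAlgebra.antipode (R := k)) LinearMap.id
              (Coalgebra.comul (R := k) z))) :=
  central_balance_general k A lam hne hlam hSlam
end
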